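/- In any nonempty single-peaked election there exists a weak Condorcet winner, i.e., a candidate c such that for every other candidate c', at least as many voters prefer c to c' as prefer c' to c. -/

import Mathlib

/-!
Every voter has a peak. Let `w` be a median of the peaks along the axis: at most half of the
voters peak strictly left of `w` and at least half peak weakly left of it. By single-peakedness a
voter whose peak is weakly left of `w` prefers `w` to every candidate right of `w`, and
symmetrically; so against any `c'` the candidate `w` is preferred by at least half of the voters,
and `c'` only by voters outside that half.
-/

open Finset

theorem exists_forall_rel_of_asymm_of_total_of_trans {C : Type*} [Finite C] [Nonempty C]
    (r : C → C → Prop) (hasym : ∀ a b, r a b → ¬ r b a)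
    (htotal : ∀ a b, a ≠ b → r a b ∨ r b a) (htrans : ∀ a b c, r a b → r b c → r a c) :
    ∃ p, ∀ x ≠ p, r p x := by
  have : IsTrans C r := ⟨htrans⟩
  have : Std.Irrefl r := ⟨fun a h => hasym a a h h⟩
  obtain ⟨p, -, hp⟩ := (Finite.wellFounded_of_trans_of_irrefl r).has_min Set.univ Set.univ_nonempty
  exact ⟨p, fun x hx => (htotal p x hx.symm).resolve_right fun hxp => hp x trivial hxp⟩

theorem rel_of_singlePeaked_of_between {C : Type*} [LinearOrder C] {r : C → C → Prop} {p b c : C}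
    (hpeak : ∀ x ≠ p, r p x)
    (hsp : ∀ a b c, ((a < b ∧ b < c) ∨ (c < b ∧ b < a)) → r a b → r b c)
    (hbetween : (p ≤ b ∧ b < c) ∨ (c < b ∧ b ≤ p)) : r b c := by
  rcases eq_or_ne b p with rfl | hbp
  · exact hpeak c (by rcases hbetween with h | h <;> [exact h.2.ne'; exact h.1.ne])
  · refine hsp p b c ?_ (hpeak b hbp)
    rcases hbetween with h | h
    exacts [.inl ⟨h.1.lt_of_ne hbp.symm, h.2⟩, .inr ⟨h.1, h.2.lt_of_ne hbp⟩]

theorem exists_median {ι α : Type*} [LinearOrder α] [Nonempty α] (s : Finset ι) (f : ι → α) :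
    ∃ m, 2 * #{v ∈ s | f v < m} ≤ #s ∧ #s ≤ 2 * #{v ∈ s | f v ≤ m} := by
  rcases s.eq_empty_or_nonempty with rfl | hs
  · exact ⟨Classical.arbitrary α, by simp⟩
  set T := {v ∈ s | #s ≤ 2 * #{u ∈ s | f u ≤ f v}}
  have hT : T.Nonempty := by
    obtain ⟨v, hv, hmax⟩ := s.exists_max_image f hs
    refine ⟨v, mem_filter.2 ⟨hv, ?_⟩⟩
    rw [filter_true_of_mem hmax]
    omega
  obtain ⟨v₀, hv₀, hmin⟩ := T.exists_min_image f hT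
  refine ⟨f v₀, ?_, (mem_filter.1 hv₀).2⟩
  by_contra! hlarge
  -- the largest value of `f` below `f v₀` would then also be attained in `T`
  obtain ⟨u, hu, hmax⟩ := exists_max_image {v ∈ s | f v < f v₀} f (card_pos.1 (by omega))
  have hlower : {v ∈ s | f v ≤ f u} = {v ∈ s | f v < f v₀} := by
    ext v
    simp only [mem_filter, and_congr_right_iff]
    exact fun hv => ⟨fun h => h.trans_lt (mem_filter.1 hu).2, fun h => hmax v (mem_filter.2 ⟨hv, h⟩)⟩
  have huT : u ∈ T := mem_filter.2 ⟨(mem_filter.1 hu).1, by rw [hlower]; omega⟩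
  exact (hmin u huT).not_gt (mem_filter.1 hu).2

theorem card_filter_le_card_filter_of_le_two_mul {ι : Type*} {s : Finset ι} {P Q R : ι → Prop}
    [DecidablePred P] [DecidablePred Q] [DecidablePred R]
    (hPQ : ∀ v ∈ s, P v → Q v) (hQR : ∀ v ∈ s, Q v → ¬ R v) (hP : #s ≤ 2 * #{v ∈ s | P v}) :
    #{v ∈ s | R v} ≤ #{v ∈ s | Q v} := by
  have hRP : #{v ∈ s | R v} ≤ #{v ∈ s | ¬ P v} :=
    card_le_card fun v hv => by
      obtain ⟨hvs, hR⟩ := mem_filter.1 hv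
      exact mem_filter.2 ⟨hvs, fun hP => hQR v hvs (hPQ v hvs hP) hR⟩
  have hPQ' : #{v ∈ s | P v} ≤ #{v ∈ s | Q v} :=
    card_le_card (monotone_filter_right s fun v hvs => hPQ v hvs)
  have hsplit : #{v ∈ s | P v} + #{v ∈ s | ¬ P v} = #s := card_filter_add_card_filter_not P
  omega

/-- In any nonempty single-peaked election there exists a weak Condorcet winner. -/
theorem exists_weak_condorcet_winner_of_singlePeaked {C ι : Type*}
    [Fintype C] [Nonempty C] [LinearOrder C]
    (voters : Finset ι) (pref : ι → C → C → Prop)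
    [∀ v a b, Decidable (pref v a b)]
    (hasym : ∀ v ∈ voters, ∀ a b : C, pref v a b → ¬ pref v b a)
    (htotal : ∀ v ∈ voters, ∀ a b : C, a ≠ b → pref v a b ∨ pref v b a)
    (htrans : ∀ v ∈ voters, ∀ a b c : C, pref v a b → pref v b c → pref v a c)
    (hsp : ∀ v ∈ voters, ∀ a b c : C,
      ((a < b ∧ b < c) ∨ (c < b ∧ b < a)) → pref v a b → pref v b c) :
    ∃ w : C, ∀ c' ≠ w,
      (voters.filter (fun v => pref v w c')).card ≥
        (voters.filter (fun v => pref v c' w)).card := by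
  choose! peak hpeak using fun v hv =>
    exists_forall_rel_of_asymm_of_total_of_trans (pref v) (hasym v hv) (htotal v hv) (htrans v hv)
  obtain ⟨w, hleft, hright⟩ := exists_median voters peak
  refine ⟨w, fun c' hc' => ?_⟩
  have hprefers (v) (hv : v ∈ voters) (h : (peak v ≤ w ∧ w < c') ∨ (c' < w ∧ w ≤ peak v)) :
      pref v w c' :=
    rel_of_singlePeaked_of_between (hpeak v hv) (hsp v hv) h
  rcases hc'.lt_or_gt with hlt | hgt
  · refine card_filter_le_card_filter_of_le_two_mul (P := fun v => ¬ peak v < w)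
      (fun v hv h => hprefers v hv (.inr ⟨hlt, not_lt.1 h⟩)) (fun v hv => hasym v hv w c') ?_
    have := card_filter_add_card_filter_not (s := voters) (fun v => peak v < w)
    omega
  · exact card_filter_le_card_filter_of_le_two_mul (P := fun v => peak v ≤ w)
      (fun v hv h => hprefers v hv (.inl ⟨h, hgt⟩)) (fun v hv => hasym v hv w c') hright
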